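/- The function h(Y) = ‖Y D Yᵀ‖_F² = trace((Y D Yᵀ)²) on ℝ^{p×s}, where D is diagonal with positive entries, is convex. -/
import Mathlib


open Matrix

/-- Squared Frobenius norm. -/
noncomputable def frobSq {m n : Type*} [Fintype m] [Fintype n] (A : Matrix m n ℝ) : ℝ :=
  ∑ i, ∑ j, (A i j) ^ 2

lemma frobSq_eq_trace {m n : Type*} [Fintype m] [Fintype n] (A : Matrix m n ℝ) :
    frobSq A = Matrix.trace (A * Aᵀ) := by
  simp [frobSq, Matrix.trace, Matrix.diag, Matrix.mul_apply, sq]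

lemma traceUV {p s : ℕ} (d : Fin s → ℝ) (U V : Matrix (Fin p) (Fin s) ℝ) :
    Matrix.trace (U * Matrix.diagonal d * Uᵀ * (V * Matrix.diagonal d * Vᵀ))
      = ∑ i, ∑ j, d i * d j * ((Uᵀ * V) i j)^2 := by
  rw [show U * Matrix.diagonal d * Uᵀ * (V * Matrix.diagonal d * Vᵀ)
      = (U * Matrix.diagonal d) * (Uᵀ * (V * Matrix.diagonal d * Vᵀ)) by
    simp [Matrix.mul_assoc]]
  rw [Matrix.trace_mul_comm]
  rw [show Uᵀ * (V * Matrix.diagonal d * Vᵀ) * (U * Matrix.diagonal d)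
      = ((Uᵀ * V) * Matrix.diagonal d) * ((Vᵀ * U) * Matrix.diagonal d) by
    simp [Matrix.mul_assoc]]
  have hVU : Vᵀ * U = (Uᵀ * V)ᵀ := by simp
  rw [hVU]
  simp only [Matrix.trace, Matrix.diag, Matrix.mul_apply, Matrix.diagonal_apply,
    Matrix.transpose_apply, mul_ite, ite_mul, mul_zero, zero_mul,
    Finset.sum_ite_eq, Finset.sum_ite_eq', Finset.mem_univ, if_true]
  rw [Finset.sum_comm]; conv_rhs => rw [Finset.sum_comm]
  refine Finset.sum_congr rfl fun i _ => Finset.sum_congr rfl fun j _ => by ring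

lemma traceUV_nonneg {p s : ℕ} (d : Fin s → ℝ) (hd : ∀ i, 0 ≤ d i)
    (U V : Matrix (Fin p) (Fin s) ℝ) :
    0 ≤ Matrix.trace (U * Matrix.diagonal d * Uᵀ * (V * Matrix.diagonal d * Vᵀ)) := by
  rw [traceUV]
  refine Finset.sum_nonneg fun i _ => Finset.sum_nonneg fun j _ =>
    mul_nonneg (mul_nonneg (hd i) (hd j)) (sq_nonneg _)

/-- `h(Y) = ‖Y D Yᵀ‖_F²` is convex when `D` is diagonal with
positive entries. -/
theorem h_convex {p s : ℕ} (d : Fin s → ℝ) (hd : ∀ i, 0 < d i) :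
    ConvexOn ℝ Set.univ
      (fun Y : Matrix (Fin p) (Fin s) ℝ =>
        frobSq (Y * Matrix.diagonal d * Yᵀ)) := by
  have hd0 : ∀ i, 0 ≤ d i := fun i => (hd i).le
  refine ⟨convex_univ, fun Y₁ _ Y₂ _ a b ha hb hab => ?_⟩
  simp only [smul_eq_mul]
  set D := Matrix.diagonal d with hD
  set Z := a • Y₁ + b • Y₂ with hZ
  set M₁ := Y₁ * D * Y₁ᵀ with hM₁
  set M₂ := Y₂ * D * Y₂ᵀ with hM₂
  set P := Z * D * Zᵀ with hP
  set Q := a • M₁ + b • M₂ with hQ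
  set W := (Y₁ - Y₂) * D * (Y₁ - Y₂)ᵀ with hW
  -- key algebraic identity
  have key : Q = P + (a * b) • W := by
    have hb' : b = 1 - a := by linarith
    subst hb'
    simp only [hQ, hP, hW, hM₁, hM₂, hZ, Matrix.transpose_add, Matrix.transpose_smul,
      Matrix.transpose_sub, Matrix.add_mul, Matrix.mul_add, Matrix.sub_mul, Matrix.mul_sub,
      Matrix.smul_mul, Matrix.mul_smul]
    module
  -- symmetry
  have Psymm : Pᵀ = P := by
    simp [hP, hD, Matrix.transpose_mul, Matrix.mul_assoc]
  have M₁symm : M₁ᵀ = M₁ := by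
    simp [hM₁, hD, Matrix.transpose_mul, Matrix.mul_assoc]
  have M₂symm : M₂ᵀ = M₂ := by
    simp [hM₂, hD, Matrix.transpose_mul, Matrix.mul_assoc]
  have Qsymm : Qᵀ = Q := by
    simp [hQ, Matrix.transpose_add, Matrix.transpose_smul, M₁symm, M₂symm]
  -- trace(P*P) ≤ trace(Q*Q)
  have hab0 : 0 ≤ a * b := mul_nonneg ha hb
  have e : Matrix.trace (Q * Q)
      = Matrix.trace (P * P) + (a*b) * Matrix.trace (W * P)
        + (a*b) * Matrix.trace (P * W) + (a*b)^2 * Matrix.trace (W * W) := by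
    rw [key]
    simp only [Matrix.add_mul, Matrix.mul_add, Matrix.smul_mul, Matrix.mul_smul,
      Matrix.trace_add, Matrix.trace_smul, smul_smul, smul_eq_mul]
    ring
  have hWP : 0 ≤ Matrix.trace (W * P) := traceUV_nonneg d hd0 _ _
  have hPW : 0 ≤ Matrix.trace (P * W) := traceUV_nonneg d hd0 _ _
  have hWW : 0 ≤ Matrix.trace (W * W) := traceUV_nonneg d hd0 _ _
  have hPQ : Matrix.trace (P * P) ≤ Matrix.trace (Q * Q) := by
    rw [e]
    nlinarith [mul_nonneg hab0 hWP, mul_nonneg hab0 hPW,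
      mul_nonneg (sq_nonneg (a*b)) hWW]
  -- frobSq Q ≤ a * frobSq M₁ + b * frobSq M₂
  have hQfin : frobSq Q ≤ a * frobSq M₁ + b * frobSq M₂ := by
    simp only [frobSq, Finset.mul_sum, ← Finset.sum_add_distrib]
    refine Finset.sum_le_sum fun i _ => Finset.sum_le_sum fun j _ => ?_
    have : Q i j = a * M₁ i j + b * M₂ i j := by
      simp [hQ, Matrix.add_apply, Matrix.smul_apply, smul_eq_mul]
    rw [this]
    nlinarith [sq_nonneg (M₁ i j - M₂ i j), mul_nonneg hab0 (sq_nonneg (M₁ i j - M₂ i j))]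
  calc frobSq P = Matrix.trace (P * P) := by rw [frobSq_eq_trace, Psymm]
    _ ≤ Matrix.trace (Q * Q) := hPQ
    _ = frobSq Q := by rw [frobSq_eq_trace, Qsymm]
    _ ≤ a * frobSq M₁ + b * frobSq M₂ := hQfin
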